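/- For every properly closed nested calculus NQ.L, every context S{·}, all variables x, y, z, and every 𝓛-formula A, the nested sequents S{ ⇒ x=x } and S{ x=y, A(x/z) ⇒ A(y/z) } are NQ.L-derivable, where A(x/z) denotes capture-avoiding substitution of x for the free occurrences of z in A. -/

import Mathlib

set_option maxHeartbeats 1000000

namespace NQML

/-! ## The first-order modal language 𝓛 -/

/-- Formulas of the first-order modal language 𝓛:
`A ::= R i (x₁,…,xₙ) | x = y | ⊥ | A ⊃ A | ∀x A | □A`, variables are natural numbers. -/
inductive Fml : Type
  | rel : ℕ → List ℕ → Fml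
  | eq  : ℕ → ℕ → Fml
  | bot : Fml
  | imp : Fml → Fml → Fml
  | all : ℕ → Fml → Fml
  | box : Fml → Fml
  deriving DecidableEq

namespace Fml

/-- Atomic formulas. -/
def Atomic : Fml → Prop
  | rel _ _ => True
  | eq _ _  => True
  | _       => False

/-- Free variables of a formula. -/
def fv : Fml → Finset ℕ
  | rel _ l => l.toFinset
  | eq a b  => {a, b}
  | bot     => ∅
  | imp A B => fv A ∪ fv B
  | all z A => (fv A).erase z
  | box A   => fv A

/-- Capture-avoiding application of a renaming `σ` to the free variables of a formula;
bound variables are renamed when a capture would occur. -/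
def substF : (ℕ → ℕ) → Fml → Fml
  | σ, rel n l => rel n (l.map σ)
  | σ, eq a b  => eq (σ a) (σ b)
  | _, bot     => bot
  | σ, imp A B => imp (substF σ A) (substF σ B)
  | σ, box A   => box (substF σ A)
  | σ, all z A =>
      let captured := ((fv A).erase z).image σ
      let z' := if z ∈ captured then captured.sup id + 1 else z
      all z' (substF (Function.update σ z z') A)

/-- `A.sub y x` is `A(y/x)`: the capture-avoiding substitution of `y` for the free
occurrences of `x` in `A`. -/
def sub (A : Fml) (y x : ℕ) : Fml := substF (fun v => if v = x then y else v) A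

/-- Defined connectives. -/
def neg (A : Fml) : Fml := imp A bot
def top : Fml := imp bot bot
def conj (A B : Fml) : Fml := neg (imp A (neg B))
def disj (A B : Fml) : Fml := imp (neg A) B
def ex (x : ℕ) (A : Fml) : Fml := neg (all x (neg A))

/-- The existence predicate `𝓔 x := ∃ y (y = x)` (with `y` a variable distinct from `x`). -/
def Epred (x : ℕ) : Fml := ex (x + 1) (eq (x + 1) x)

end Fml

/-! ## Nested sequents -/

mutual
  /-- Nested sequents `S ::= X;Γ⇒Δ | S,[S],…,[S]`: a node carries a signature `X`
  (a multiset of variables), an antecedent `Γ` and a succedent `Δ` (multisets of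
  formulas), and a list of bracketed nested sequents. -/
  inductive NSeq : Type
    | node : Multiset ℕ → Multiset Fml → Multiset Fml → NSeqs → NSeq
  /-- Lists of nested sequents. -/
  inductive NSeqs : Type
    | nil  : NSeqs
    | cons : NSeq → NSeqs → NSeqs
end

namespace NSeqs
def append : NSeqs → NSeqs → NSeqs
  | nil, t => t
  | cons s ss, t => cons s (append ss t)
end NSeqs

instance : Append NSeqs := ⟨NSeqs.append⟩

/-- Merging two nested sequents at the root. -/
def NSeq.merge : NSeq → NSeq → NSeq
  | .node X Γ Δ cs, .node Y Φ Ψ ds => .node (X + Y) (Γ + Φ) (Δ + Ψ) (cs ++ ds)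

/-- Free variables of a multiset of formulas. -/
def msFv (Γ : Multiset Fml) : Finset ℕ := (Γ.map Fml.fv).sup

mutual
  /-- Variables occurring (in the signature or free in a formula) in a nested sequent. -/
  def NSeq.fv : NSeq → Finset ℕ
    | .node X Γ Δ cs => X.toFinset ∪ msFv Γ ∪ msFv Δ ∪ NSeqs.fv cs
  def NSeqs.fv : NSeqs → Finset ℕ
    | .nil => ∅
    | .cons s ss => NSeq.fv s ∪ NSeqs.fv ss
end

mutual
  /-- Componentwise application of a renaming to a nested sequent. -/
  def NSeq.subst : NSeq → (ℕ → ℕ) → NSeq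
    | .node X Γ Δ cs, σ =>
        .node (X.map σ) (Γ.map (Fml.substF σ)) (Δ.map (Fml.substF σ)) (NSeqs.subst cs σ)
  def NSeqs.subst : NSeqs → (ℕ → ℕ) → NSeqs
    | .nil, _ => .nil
    | .cons s ss, σ => .cons (NSeq.subst s σ) (NSeqs.subst ss σ)
end

/-! ## Contexts -/

mutual
  /-- Contexts: nested sequents with holes in consequent position.  A node records
  how many holes occur at that node together with the bracketed sub-contexts. -/
  inductive NCtx : Type
    | node : Multiset ℕ → Multiset Fml → Multiset Fml → ℕ → NCtxs → NCtx
  inductive NCtxs : Type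
    | nil  : NCtxs
    | cons : NCtx → NCtxs → NCtxs
end

namespace NCtxs
def append : NCtxs → NCtxs → NCtxs
  | nil, t => t
  | cons c cs, t => cons c (append cs t)
end NCtxs

instance : Append NCtxs := ⟨NCtxs.append⟩

mutual
  /-- The number of holes of a context. -/
  def NCtx.holes : NCtx → ℕ
    | .node _ _ _ k cs => k + NCtxs.holes cs
  def NCtxs.holes : NCtxs → ℕ
    | .nil => 0
    | .cons c cs => NCtx.holes c + NCtxs.holes cs
end

mutual
  /-- The list of depths of the holes of a context (in the order in which they are filled). -/
  def NCtx.holeDepths : NCtx → List ℕ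
    | .node _ _ _ k cs => List.replicate k 0 ++ (NCtxs.holeDepths cs).map (· + 1)
  def NCtxs.holeDepths : NCtxs → List ℕ
    | .nil => []
    | .cons c cs => NCtx.holeDepths c ++ NCtxs.holeDepths cs
end

mutual
  /-- Filling the holes of a context with a list of nested sequents: each nested sequent
  is merged at the node where the corresponding hole occurs. -/
  def NCtx.fill : NCtx → List NSeq → NSeq
    | .node X Γ Δ k cs, L =>
        (L.take k).foldl NSeq.merge (.node X Γ Δ (NCtxs.fill cs (L.drop k)))
  def NCtxs.fill : NCtxs → List NSeq → NSeqs
    | .nil, _ => .nil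
    | .cons c cs, L =>
        .cons (NCtx.fill c (L.take (NCtx.holes c))) (NCtxs.fill cs (L.drop (NCtx.holes c)))
end

/-- Merging two contexts at the root. -/
def NCtx.mergeC : NCtx → NCtx → NCtx
  | .node X Γ Δ k cs, .node Y Φ Ψ j ds => .node (X + Y) (Γ + Φ) (Δ + Ψ) (k + j) (cs ++ ds)

mutual
  /-- Plugging a context into the first hole of a context. -/
  def NCtx.plug : NCtx → NCtx → NCtx
    | .node X Γ Δ k cs, D =>
        if k = 0 then .node X Γ Δ k (NCtxs.plug cs D)
        else NCtx.mergeC (.node X Γ Δ (k - 1) cs) D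
  def NCtxs.plug : NCtxs → NCtx → NCtxs
    | .nil, _ => .nil
    | .cons c cs, D =>
        if NCtx.holes c = 0 then .cons c (NCtxs.plug cs D) else .cons (NCtx.plug c D) cs
end

/-! ## Frames, axioms and proper closure -/

/-- The axioms D, T, B, 4, 5, CBF, BF, UI. -/
inductive Ax : Type
  | D | T | B | four | five | cbf | bf | ui
  deriving DecidableEq

/-- A frame `⟨W, R, D⟩` with worlds `W`, accessibility `Rel` and domains `Dom` over a
universe `U` of objects; some world has a nonempty domain. -/
structure Frame (W U : Type) : Type where
  Rel : W → W → Prop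
  Dom : W → Set U
  nonempty : Nonempty W
  dom_nonempty : ∃ w, (Dom w).Nonempty

/-- The frame/domain condition corresponding to each axiom. -/
def Frame.sat {W U : Type} (F : Frame W U) : Ax → Prop
  | .D    => ∀ w, ∃ v, F.Rel w v
  | .T    => ∀ w, F.Rel w w
  | .B    => ∀ w v, F.Rel w v → F.Rel v w
  | .four => ∀ w v u, F.Rel w v → F.Rel v u → F.Rel w u
  | .five => ∀ w v u, F.Rel w v → F.Rel w u → F.Rel v u
  | .cbf  => ∀ w v, F.Rel w v → F.Dom w ⊆ F.Dom v
  | .bf   => ∀ w v, F.Rel w v → F.Dom v ⊆ F.Dom w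
  | .ui   => ∀ w v, F.Dom w = F.Dom v

/-- A `Q.L`-frame: a frame satisfying the conditions of all axioms in `L`. -/
def FrameFor {W U : Type} (F : Frame W U) (L : Set Ax) : Prop := ∀ a ∈ L, F.sat a

/-- `L` is properly closed: whenever every `Q.L`-frame satisfies the frame condition of an
axiom among 4, 5, CBF, BF, that axiom belongs to `L`. -/
def ProperlyClosed (L : Set Ax) : Prop :=
  ∀ a ∈ ({Ax.four, Ax.five, Ax.cbf, Ax.bf} : Set Ax),
    (∀ (W U : Type) (F : Frame W U), FrameFor F L → F.sat a) → a ∈ L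

/-! ## Models, satisfaction, validity and the formula interpretation -/

/-- A model: a frame together with a valuation interpreting each `n`-ary relation symbol
at each world by tuples of objects from the union of the domains. -/
structure Model (W U : Type) extends Frame W U where
  Val : W → ℕ → List U → Prop
  val_dom : ∀ w i l, Val w i l → ∀ u ∈ l, ∃ v, u ∈ Dom v

/-- Satisfaction of a formula at a world under an assignment (variables are rigid). -/
def Model.sat {W U : Type} (M : Model W U) : (ℕ → U) → W → Fml → Prop
  | σ, w, .rel i l => M.Val w i (l.map σ)
  | σ, _, .eq a b  => σ a = σ b
  | _, _, .bot     => False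
  | σ, w, .imp A B => M.sat σ w A → M.sat σ w B
  | σ, w, .all x A => ∀ u ∈ M.Dom w, M.sat (Function.update σ x u) w A
  | σ, w, .box A   => ∀ v, M.Rel w v → M.sat σ v A

/-- An assignment maps every variable into the union of the domains. -/
def Assign {W U : Type} (M : Model W U) (σ : ℕ → U) : Prop := ∀ x, ∃ w, σ x ∈ M.Dom w

/-- `Q.L`-validity: truth at every world of every model on a `Q.L`-frame under every
assignment. -/
def Valid (L : Set Ax) (A : Fml) : Prop :=
  ∀ (W U : Type) (M : Model W U), FrameFor M.toFrame L →
    ∀ σ, Assign M σ → ∀ w, M.sat σ w A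

/-- Iterated conjunction and disjunction. -/
def listConj : List Fml → Fml
  | [] => Fml.top
  | A :: l => Fml.conj A (listConj l)

def listDisj : List Fml → Fml
  | [] => Fml.bot
  | A :: l => Fml.disj A (listDisj l)

mutual
  /-- The formula interpretation of a nested sequent:
  `fm(X;Γ⇒Δ,[S₁],…,[Sₙ]) = (⋀_{x∈X} 𝓔x ∧ ⋀Γ ⊃ ⋁Δ) ∨ ⋁ₖ □ fm(Sₖ)`. -/
  noncomputable def NSeq.fm : NSeq → Fml
    | .node X Γ Δ cs =>
        Fml.disj
          (Fml.imp (Fml.conj (listConj (X.toList.map Fml.Epred)) (listConj Γ.toList))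
            (listDisj Δ.toList))
          (NSeqs.fmDisj cs)
  noncomputable def NSeqs.fmDisj : NSeqs → Fml
    | .nil => Fml.bot
    | .cons s ss => Fml.disj (Fml.box (NSeq.fm s)) (NSeqs.fmDisj ss)
end

/-! ## The nested calculus NQ.L -/

/-- A single rule application (instance) of the nested calculus `NQ.L`: `Step L ps S`
says that `S` can be inferred from the list of premisses `ps` by one rule of `NQ.L`. -/
inductive Step (L : Set Ax) : List NSeq → NSeq → Prop
  /-- Initial sequents `S{X; P,Γ ⇒ Δ,P}` with `P` atomic. -/
  | init (C : NCtx) (X : Multiset ℕ) (Γ Δ : Multiset Fml) (P : Fml) :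
      C.holes = 1 → P.Atomic →
      Step L [] (C.fill [.node X (P ::ₘ Γ) (P ::ₘ Δ) .nil])
  /-- `L⊥`. -/
  | botL (C : NCtx) (X : Multiset ℕ) (Γ Δ : Multiset Fml) :
      C.holes = 1 →
      Step L [] (C.fill [.node X (Fml.bot ::ₘ Γ) Δ .nil])
  /-- `L⊃`. -/
  | impL (C : NCtx) (X : Multiset ℕ) (Γ Δ : Multiset Fml) (A B : Fml) :
      C.holes = 1 →
      Step L [C.fill [.node X Γ (A ::ₘ Δ) .nil], C.fill [.node X (B ::ₘ Γ) Δ .nil]]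
        (C.fill [.node X (Fml.imp A B ::ₘ Γ) Δ .nil])
  /-- `R⊃`. -/
  | impR (C : NCtx) (X : Multiset ℕ) (Γ Δ : Multiset Fml) (A B : Fml) :
      C.holes = 1 →
      Step L [C.fill [.node X (A ::ₘ Γ) (B ::ₘ Δ) .nil]]
        (C.fill [.node X Γ (Fml.imp A B ::ₘ Δ) .nil])
  /-- `L∀`. -/
  | allL (C : NCtx) (X : Multiset ℕ) (Γ Δ : Multiset Fml) (x z : ℕ) (A : Fml) :
      C.holes = 1 →
      Step L [C.fill [.node (z ::ₘ X) (A.sub z x ::ₘ Fml.all x A ::ₘ Γ) Δ .nil]]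
        (C.fill [.node (z ::ₘ X) (Fml.all x A ::ₘ Γ) Δ .nil])
  /-- `R∀` with `y` fresh. -/
  | allR (C : NCtx) (X : Multiset ℕ) (Γ Δ : Multiset Fml) (x y : ℕ) (A : Fml) :
      C.holes = 1 → y ∉ NSeq.fv (C.fill [.node X Γ (Fml.all x A ::ₘ Δ) .nil]) →
      Step L [C.fill [.node (y ::ₘ X) Γ (A.sub y x ::ₘ Δ) .nil]]
        (C.fill [.node X Γ (Fml.all x A ::ₘ Δ) .nil])
  /-- `L□`. -/
  | boxL (C : NCtx) (X Y : Multiset ℕ) (Γ Δ Φ Ψ : Multiset Fml) (ts : NSeqs) (A : Fml) :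
      C.holes = 1 →
      Step L [C.fill [.node X (Fml.box A ::ₘ Γ) Δ (.cons (.node Y (A ::ₘ Φ) Ψ ts) .nil)]]
        (C.fill [.node X (Fml.box A ::ₘ Γ) Δ (.cons (.node Y Φ Ψ ts) .nil)])
  /-- `R□`. -/
  | boxR (C : NCtx) (X : Multiset ℕ) (Γ Δ : Multiset Fml) (A : Fml) :
      C.holes = 1 →
      Step L [C.fill [.node X Γ Δ (.cons (.node 0 0 {A} .nil) .nil)]]
        (C.fill [.node X Γ (Fml.box A ::ₘ Δ) .nil])
  /-- `Ref`. -/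
  | ref (C : NCtx) (X : Multiset ℕ) (Γ Δ : Multiset Fml) (x : ℕ) :
      C.holes = 1 →
      Step L [C.fill [.node X (Fml.eq x x ::ₘ Γ) Δ .nil]] (C.fill [.node X Γ Δ .nil])
  /-- `Repl` (with `P` atomic). -/
  | repl (C : NCtx) (X : Multiset ℕ) (Γ Δ : Multiset Fml) (x y z : ℕ) (P : Fml) :
      C.holes = 1 → P.Atomic →
      Step L [C.fill [.node X (P.sub y z ::ₘ Fml.eq x y ::ₘ P.sub x z ::ₘ Γ) Δ .nil]]
        (C.fill [.node X (Fml.eq x y ::ₘ P.sub x z ::ₘ Γ) Δ .nil])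
  /-- `Repl_X`. -/
  | replX (C : NCtx) (X : Multiset ℕ) (Γ Δ : Multiset Fml) (x y : ℕ) :
      C.holes = 1 →
      Step L [C.fill [.node (x ::ₘ y ::ₘ X) (Fml.eq x y ::ₘ Γ) Δ .nil]]
        (C.fill [.node (x ::ₘ X) (Fml.eq x y ::ₘ Γ) Δ .nil])
  /-- `Rig`. -/
  | rig (C : NCtx) (X Y : Multiset ℕ) (Γ Δ Φ Ψ : Multiset Fml) (x y : ℕ) :
      C.holes = 2 →
      Step L [C.fill [.node X (Fml.eq x y ::ₘ Γ) Δ .nil, .node Y (Fml.eq x y ::ₘ Φ) Ψ .nil]]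
        (C.fill [.node X (Fml.eq x y ::ₘ Γ) Δ .nil, .node Y Φ Ψ .nil])
  /-- `R_D`. -/
  | rD (C : NCtx) (X : Multiset ℕ) (Γ Δ : Multiset Fml) :
      Ax.D ∈ L → C.holes = 1 →
      Step L [C.fill [.node X Γ Δ (.cons (.node 0 0 0 .nil) .nil)]]
        (C.fill [.node X Γ Δ .nil])
  /-- `R_T`. -/
  | rT (C : NCtx) (X : Multiset ℕ) (Γ Δ : Multiset Fml) (A : Fml) :
      Ax.T ∈ L → C.holes = 1 →
      Step L [C.fill [.node X (A ::ₘ Fml.box A ::ₘ Γ) Δ .nil]]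
        (C.fill [.node X (Fml.box A ::ₘ Γ) Δ .nil])
  /-- `R_B`. -/
  | rB (C : NCtx) (X Y : Multiset ℕ) (Γ Δ Φ Ψ : Multiset Fml) (ts : NSeqs) (A : Fml) :
      Ax.B ∈ L → C.holes = 1 →
      Step L [C.fill [.node X (A ::ₘ Γ) Δ (.cons (.node Y (Fml.box A ::ₘ Φ) Ψ ts) .nil)]]
        (C.fill [.node X Γ Δ (.cons (.node Y (Fml.box A ::ₘ Φ) Ψ ts) .nil)])
  /-- `R_4`. -/
  | r4 (C : NCtx) (X Y : Multiset ℕ) (Γ Δ Φ Ψ : Multiset Fml) (ts : NSeqs) (A : Fml) :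
      Ax.four ∈ L → C.holes = 1 →
      Step L [C.fill [.node X (Fml.box A ::ₘ Γ) Δ (.cons (.node Y (Fml.box A ::ₘ Φ) Ψ ts) .nil)]]
        (C.fill [.node X (Fml.box A ::ₘ Γ) Δ (.cons (.node Y Φ Ψ ts) .nil)])
  /-- `R_5`, with the side condition that the second hole has depth ≥ 1. -/
  | r5 (C : NCtx) (X Y : Multiset ℕ) (Γ Δ Φ Ψ : Multiset Fml) (A : Fml) :
      Ax.five ∈ L → (∃ d₁ d₂, C.holeDepths = [d₁, d₂] ∧ 1 ≤ d₂) →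
      Step L [C.fill [.node X (Fml.box A ::ₘ Γ) Δ .nil, .node Y (Fml.box A ::ₘ Φ) Ψ .nil]]
        (C.fill [.node X (Fml.box A ::ₘ Γ) Δ .nil, .node Y Φ Ψ .nil])
  /-- `R_cbf`. -/
  | rcbf (C : NCtx) (X Y : Multiset ℕ) (Γ Δ Φ Ψ : Multiset Fml) (ts : NSeqs) (x : ℕ) :
      Ax.cbf ∈ L → C.holes = 1 →
      Step L [C.fill [.node (x ::ₘ X) Γ Δ (.cons (.node (x ::ₘ Y) Φ Ψ ts) .nil)]]
        (C.fill [.node (x ::ₘ X) Γ Δ (.cons (.node Y Φ Ψ ts) .nil)])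
  /-- `R_bf`. -/
  | rbf (C : NCtx) (X Y : Multiset ℕ) (Γ Δ Φ Ψ : Multiset Fml) (ts : NSeqs) (x : ℕ) :
      Ax.bf ∈ L → C.holes = 1 →
      Step L [C.fill [.node (x ::ₘ X) Γ Δ (.cons (.node (x ::ₘ Y) Φ Ψ ts) .nil)]]
        (C.fill [.node X Γ Δ (.cons (.node (x ::ₘ Y) Φ Ψ ts) .nil)])
  /-- `R_ui`. -/
  | rui (C : NCtx) (X : Multiset ℕ) (Γ Δ : Multiset Fml) (x : ℕ) :
      Ax.ui ∈ L → C.holes = 1 →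
      Step L [C.fill [.node (x ::ₘ X) Γ Δ .nil]] (C.fill [.node X Γ Δ .nil])
  /-- `R_5dom`, present iff `5 ∈ L` and `{CBF, BF} ∩ L ≠ ∅`; both holes have depth ≥ 1. -/
  | r5dom (C : NCtx) (X Y : Multiset ℕ) (Γ Δ Φ Ψ : Multiset Fml) (x : ℕ) :
      Ax.five ∈ L → (Ax.cbf ∈ L ∨ Ax.bf ∈ L) →
      (∃ d₁ d₂, C.holeDepths = [d₁, d₂] ∧ 1 ≤ d₁ ∧ 1 ≤ d₂) →
      Step L [C.fill [.node (x ::ₘ X) Γ Δ .nil, .node (x ::ₘ Y) Φ Ψ .nil]]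
        (C.fill [.node (x ::ₘ X) Γ Δ .nil, .node Y Φ Ψ .nil])

/-- `Deriv L n S`: the nested sequent `S` is derivable in `NQ.L` with a derivation of
height at most `n`. -/
inductive Deriv (L : Set Ax) : ℕ → NSeq → Prop
  | step {n : ℕ} {ps : List NSeq} {S : NSeq} :
      Step L ps S → (∀ p ∈ ps, Deriv L n p) → Deriv L (n + 1) S

/-- `S` is `NQ.L`-derivable. -/
def Derivable (L : Set Ax) (S : NSeq) : Prop := ∃ n, Deriv L n S

end NQML

namespace NQML


/-! ### Auxiliary syntactic lemmas -/

namespace Fml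

/-- Size of a formula (invariant under renaming). -/
def size : Fml → ℕ
  | rel _ _ => 1
  | eq _ _  => 1
  | bot     => 1
  | imp A B => size A + size B + 1
  | all _ A => size A + 1
  | box A   => size A + 1

lemma one_le_size : ∀ A : Fml, 1 ≤ A.size
  | rel _ _ => le_refl _
  | eq _ _ => le_refl _
  | bot => le_refl _
  | imp A B => by simp [size]
  | all _ A => by simp [size]
  | box A => by simp [size]

lemma substF_all (σ : ℕ → ℕ) (z : ℕ) (A : Fml) :
    substF σ (all z A) =
      all (if z ∈ ((fv A).erase z).image σ then (((fv A).erase z).image σ).sup id + 1 else z)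
        (substF (Function.update σ z
          (if z ∈ ((fv A).erase z).image σ then (((fv A).erase z).image σ).sup id + 1 else z)) A) := rfl

lemma choice_not_mem (c : Finset ℕ) (z : ℕ) :
    (if z ∈ c then c.sup id + 1 else z) ∉ c := by
  split_ifs with h
  · intro hmem
    have := Finset.le_sup (f := id) hmem
    simp only [id] at this
    omega
  · exact h

lemma size_substF : ∀ (A : Fml) (σ : ℕ → ℕ), (substF σ A).size = A.size
  | rel _ _, σ => rfl
  | eq _ _, σ => rfl
  | bot, σ => rfl
  | imp A B, σ => by simp [substF, size, size_substF A, size_substF B]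
  | box A, σ => by simp [substF, size, size_substF A]
  | all z A, σ => by
      rw [substF_all]
      simp [size, size_substF A]

lemma fv_substF : ∀ (A : Fml) (σ : ℕ → ℕ), (substF σ A).fv = (fv A).image σ
  | rel n l, σ => by
      simp only [substF, fv]
      ext a; simp
  | eq a b, σ => by simp [substF, fv, Finset.image_insert]
  | bot, σ => by simp [substF, fv]
  | imp A B, σ => by simp [substF, fv, fv_substF A, fv_substF B, Finset.image_union]
  | box A, σ => by simp [substF, fv, fv_substF A]
  | all z A, σ => by
      rw [substF_all]
      set cap := ((fv A).erase z).image σ with hcap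
      set z' := if z ∈ cap then cap.sup id + 1 else z with hz'
      have hz'cap : z' ∉ cap := hz' ▸ choice_not_mem cap z
      show ((substF (Function.update σ z z') A).fv).erase z' = cap
      rw [fv_substF A]
      ext a
      constructor
      · intro h
        have haz : a ≠ z' := (Finset.mem_erase.1 h).1
        obtain ⟨u, hu, hua⟩ := Finset.mem_image.1 (Finset.mem_erase.1 h).2
        by_cases huz : u = z
        · subst huz
          rw [Function.update_self] at hua
          exact absurd hua.symm (Ne.symm haz).symm
        · rw [Function.update_of_ne huz] at hua
          exact Finset.mem_image.2 ⟨u, Finset.mem_erase.2 ⟨huz, hu⟩, hua⟩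
      · intro h
        obtain ⟨u, hu, hua⟩ := Finset.mem_image.1 h
        have huz : u ≠ z := (Finset.mem_erase.1 hu).1
        refine Finset.mem_erase.2 ⟨fun hh => hz'cap (hh ▸ h), ?_⟩
        refine Finset.mem_image.2 ⟨u, Finset.mem_of_mem_erase hu, ?_⟩
        rw [Function.update_of_ne huz]
        exact hua

end Fml

/-! ### Stacks of substitutions -/

/-- Apply a list of renamings, first element first. -/
def applyStack (p : List (ℕ → ℕ)) (B : Fml) : Fml := p.foldl (fun b σ => Fml.substF σ b) B

/-- Compose a list of renamings, first element first. -/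
def evalStack (p : List (ℕ → ℕ)) (u : ℕ) : ℕ := p.foldl (fun a σ => σ a) u

@[simp] lemma applyStack_nil (B : Fml) : applyStack [] B = B := rfl
@[simp] lemma applyStack_cons (g : ℕ → ℕ) (p : List (ℕ → ℕ)) (B : Fml) :
    applyStack (g :: p) B = applyStack p (Fml.substF g B) := rfl
@[simp] lemma evalStack_nil (u : ℕ) : evalStack [] u = u := rfl
@[simp] lemma evalStack_cons (g : ℕ → ℕ) (p : List (ℕ → ℕ)) (u : ℕ) :
    evalStack (g :: p) u = evalStack p (g u) := rfl
lemma applyStack_append_single (p : List (ℕ → ℕ)) (f : ℕ → ℕ) (B : Fml) :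
    applyStack (p ++ [f]) B = Fml.substF f (applyStack p B) := by
  simp [applyStack, List.foldl_append]
lemma evalStack_append_single (p : List (ℕ → ℕ)) (f : ℕ → ℕ) (u : ℕ) :
    evalStack (p ++ [f]) u = f (evalStack p u) := by
  simp [evalStack, List.foldl_append]

lemma applyStack_rel (p : List (ℕ → ℕ)) (i : ℕ) (l : List ℕ) :
    applyStack p (.rel i l) = .rel i (l.map (evalStack p)) := by
  induction p generalizing l with
  | nil => show _ = Fml.rel i (l.map (fun u => u)); simp
  | cons g p ih =>
      simp only [applyStack_cons, Fml.substF, ih, List.map_map]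
      rfl

lemma applyStack_eq (p : List (ℕ → ℕ)) (a b : ℕ) :
    applyStack p (.eq a b) = .eq (evalStack p a) (evalStack p b) := by
  induction p generalizing a b with
  | nil => simp
  | cons g p ih => simp [Fml.substF, ih]

lemma applyStack_bot (p : List (ℕ → ℕ)) : applyStack p .bot = .bot := by
  induction p with
  | nil => rfl
  | cons g p ih => simpa [Fml.substF] using ih

lemma applyStack_imp (p : List (ℕ → ℕ)) (A B : Fml) :
    applyStack p (.imp A B) = .imp (applyStack p A) (applyStack p B) := by
  induction p generalizing A B with
  | nil => simp
  | cons g p ih => simp [Fml.substF, ih]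

lemma applyStack_box (p : List (ℕ → ℕ)) (A : Fml) :
    applyStack p (.box A) = .box (applyStack p A) := by
  induction p generalizing A with
  | nil => simp
  | cons g p ih => simp [Fml.substF, ih]

/-- Structure of a stack applied to a universally quantified formula. -/
lemma applyStack_all (p : List (ℕ → ℕ)) : ∀ (w : ℕ) (B : Fml),
    ∃ (W : ℕ) (q : List (ℕ → ℕ)),
      applyStack p (.all w B) = .all W (applyStack q B) ∧
      evalStack q w = W ∧
      ∀ u ∈ (B.fv).erase w, evalStack q u = evalStack p u ∧ evalStack p u ≠ W := by
  induction p with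
  | nil =>
      intro w B
      exact ⟨w, [], rfl, rfl, fun u hu => ⟨rfl, Finset.ne_of_mem_erase hu⟩⟩
  | cons g p ih =>
      intro w B
      rw [applyStack_cons, Fml.substF_all]
      set cap := ((B.fv).erase w).image g with hcap
      set w₁ := if w ∈ cap then cap.sup id + 1 else w with hw₁
      have hw₁cap : w₁ ∉ cap := hw₁ ▸ Fml.choice_not_mem cap w
      set g₁ := Function.update g w w₁ with hg₁
      obtain ⟨W, q, heq, hw, hother⟩ := ih w₁ (Fml.substF g₁ B)
      refine ⟨W, g₁ :: q, ?_, ?_, ?_⟩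
      · rw [heq]; rfl
      · show evalStack q (g₁ w) = W
        rw [hg₁, Function.update_self]
        exact hw
      · intro u hu
        have huw : u ≠ w := Finset.ne_of_mem_erase hu
        have hgu : g₁ u = g u := Function.update_of_ne huw _ _
        have hmem : g u ∈ cap := Finset.mem_image_of_mem g hu
        have hgu_ne : g u ≠ w₁ := fun h => hw₁cap (h ▸ hmem)
        have hmem' : g u ∈ ((Fml.substF g₁ B).fv).erase w₁ := by
          rw [Fml.fv_substF]
          refine Finset.mem_erase.2 ⟨hgu_ne, ?_⟩
          rw [← hgu]
          exact Finset.mem_image_of_mem g₁ (Finset.mem_of_mem_erase hu)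
        obtain ⟨h1, h2⟩ := hother (g u) hmem'
        refine ⟨?_, ?_⟩
        · show evalStack q (g₁ u) = evalStack p (g u)
          rw [hgu]; exact h1
        · show evalStack p (g u) ≠ W
          exact h2


/-! ### Context plumbing lemmas -/

theorem nseqs_append_assoc : ∀ (a b c : NSeqs), a ++ b ++ c = a ++ (b ++ c)
  | .nil, _, _ => rfl
  | .cons s a, b, c => congrArg (NSeqs.cons s) (nseqs_append_assoc a b c)

theorem merge_assoc (a b c : NSeq) : (a.merge b).merge c = a.merge (b.merge c) := by
  cases a with | node X Γ Δ cs =>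
  cases b with | node Y Φ Ψ ds =>
  cases c with | node Z Θ Ξ es =>
  simp [NSeq.merge, add_assoc, nseqs_append_assoc]

theorem foldl_merge : ∀ (l : List NSeq) (a b : NSeq),
    l.foldl NSeq.merge (a.merge b) = a.merge (l.foldl NSeq.merge b)
  | [], a, b => rfl
  | s :: l, a, b => by
      simp only [List.foldl_cons]
      rw [merge_assoc, foldl_merge l a (b.merge s)]

mutual
theorem fill_zero_c : ∀ (c : NCtx), c.holes = 0 → ∀ (l l' : List NSeq), c.fill l = c.fill l'
  | .node X Γ Δ k cs, h, l, l' => by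
      have h' : k + cs.holes = 0 := h
      have hk : k = 0 := by omega
      have hcs : cs.holes = 0 := by omega
      subst hk
      simp only [NCtx.fill, List.take_zero, List.drop_zero, List.foldl_nil]
      exact congrArg (fun t => NSeq.node X Γ Δ t) (fill_zero_cs cs hcs l l')
theorem fill_zero_cs : ∀ (cs : NCtxs), cs.holes = 0 → ∀ (l l' : List NSeq),
    NCtxs.fill cs l = NCtxs.fill cs l'
  | .nil, _, _, _ => rfl
  | .cons c cs, h, l, l' => by
      have h' : c.holes + cs.holes = 0 := h
      have hc : c.holes = 0 := by omega
      have hcs : cs.holes = 0 := by omega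
      simp only [NCtxs.fill, hc, List.take_zero, List.drop_zero]
      rw [fill_zero_cs cs hcs l l']
end

mutual
theorem fill_take_c : ∀ (c : NCtx) (l : List NSeq), c.fill (l.take c.holes) = c.fill l
  | .node X Γ Δ k cs, l => by
      show NCtx.fill _ (l.take (k + cs.holes)) = _
      simp only [NCtx.fill, List.take_take, Nat.min_eq_left (Nat.le_add_right k cs.holes)]
      rw [List.drop_take]
      have hx : k + cs.holes - k = cs.holes := by omega
      rw [hx, fill_take_cs cs (l.drop k)]
theorem fill_take_cs : ∀ (cs : NCtxs) (l : List NSeq),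
    NCtxs.fill cs (l.take cs.holes) = NCtxs.fill cs l
  | .nil, _ => rfl
  | .cons c cs, l => by
      show NCtxs.fill _ (l.take (c.holes + cs.holes)) = _
      simp only [NCtxs.fill, List.take_take,
        Nat.min_eq_left (Nat.le_add_right c.holes cs.holes)]
      rw [List.drop_take]
      have hx : c.holes + cs.holes - c.holes = cs.holes := by omega
      rw [hx, fill_take_cs cs (l.drop c.holes)]
end

theorem holes_append : ∀ (cs ds : NCtxs), (cs ++ ds).holes = cs.holes + ds.holes
  | .nil, ds => (Nat.zero_add _).symm
  | .cons c cs, ds => by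
      show c.holes + (cs ++ ds).holes = c.holes + cs.holes + ds.holes
      rw [holes_append cs ds, Nat.add_assoc]

theorem fill_append_zero : ∀ (cs ds : NCtxs), cs.holes = 0 → ∀ (l : List NSeq),
    NCtxs.fill (cs ++ ds) l = (NCtxs.fill cs []) ++ NCtxs.fill ds l
  | .nil, ds, _, l => rfl
  | .cons c cs, ds, h, l => by
      have h' : c.holes + cs.holes = 0 := h
      have hc : c.holes = 0 := by omega
      have hcs : cs.holes = 0 := by omega
      show NCtxs.fill (.cons c (cs ++ ds)) l = _
      simp only [NCtxs.fill, hc, List.take_zero, List.drop_zero]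
      rw [fill_append_zero cs ds hcs l]
      rfl

mutual
theorem holes_plug_c : ∀ (c D : NCtx), c.holes = 1 → (c.plug D).holes = D.holes
  | .node X Γ Δ k cs, D, h => by
      have h' : k + cs.holes = 1 := h
      by_cases hk : k = 0
      · have hcs : cs.holes = 1 := by omega
        subst hk
        simp only [NCtx.plug, if_pos rfl]
        show 0 + (cs.plug D).holes = D.holes
        rw [holes_plug_cs cs D hcs, Nat.zero_add]
      · have hk1 : k = 1 := by omega
        have hcs : cs.holes = 0 := by omega
        subst hk1
        cases D with | node Y Φ Ψ j ds =>
        simp only [NCtx.plug, if_neg hk, NCtx.mergeC]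
        show (1 - 1) + j + (cs ++ ds).holes = j + ds.holes
        rw [holes_append cs ds, hcs]
        omega
theorem holes_plug_cs : ∀ (cs : NCtxs) (D : NCtx), cs.holes = 1 → (cs.plug D).holes = D.holes
  | .nil, D, h => by exact absurd h (by simp [NCtxs.holes])
  | .cons c cs, D, h => by
      have h' : c.holes + cs.holes = 1 := h
      by_cases hc : c.holes = 0
      · have hcs : cs.holes = 1 := by omega
        simp only [NCtxs.plug, if_pos hc]
        show c.holes + (cs.plug D).holes = D.holes
        rw [holes_plug_cs cs D hcs, hc, Nat.zero_add]
      · have hc1 : c.holes = 1 := by omega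
        have hcs : cs.holes = 0 := by omega
        simp only [NCtxs.plug, if_neg hc]
        show (c.plug D).holes + cs.holes = D.holes
        rw [holes_plug_c c D hc1, hcs]
        omega
end

mutual
theorem fill_plug_c : ∀ (c D : NCtx) (l : List NSeq), c.holes = 1 →
    (c.plug D).fill l = c.fill [D.fill l]
  | .node X Γ Δ k cs, D, l, h => by
      have h' : k + cs.holes = 1 := h
      by_cases hk : k = 0
      · have hcs : cs.holes = 1 := by omega
        subst hk
        simp only [NCtx.plug, if_pos rfl]
        show NCtx.fill (.node X Γ Δ 0 (cs.plug D)) l = NCtx.fill (.node X Γ Δ 0 cs) [D.fill l]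
        simp only [NCtx.fill, List.take_zero, List.drop_zero, List.foldl_nil]
        exact congrArg (fun t => NSeq.node X Γ Δ t) (fill_plug_cs cs D l hcs)
      · have hk1 : k = 1 := by omega
        have hcs : cs.holes = 0 := by omega
        subst hk1
        cases D with | node Y Φ Ψ j ds =>
        simp only [NCtx.plug, if_neg hk, NCtx.mergeC]
        show NCtx.fill (.node (X + Y) (Γ + Φ) (Δ + Ψ) (1 - 1 + j) (cs ++ ds)) l
          = NCtx.fill (.node X Γ Δ 1 cs) [NCtx.fill (.node Y Φ Ψ j ds) l]
        simp only [NCtx.fill]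
        have hj : 1 - 1 + j = j := by omega
        rw [hj]
        rw [fill_append_zero cs ds hcs (l.drop j)]
        simp only [List.take_succ_cons, List.take_zero, List.drop_succ_cons, List.drop_zero,
          List.foldl_cons, List.foldl_nil]
        rw [← foldl_merge]
        simp only [NSeq.merge]
theorem fill_plug_cs : ∀ (cs : NCtxs) (D : NCtx) (l : List NSeq), cs.holes = 1 →
    NCtxs.fill (cs.plug D) l = NCtxs.fill cs [D.fill l]
  | .nil, D, l, h => by exact absurd h (by simp [NCtxs.holes])
  | .cons c cs, D, l, h => by
      have h' : c.holes + cs.holes = 1 := h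
      by_cases hc : c.holes = 0
      · have hcs : cs.holes = 1 := by omega
        simp only [NCtxs.plug, if_pos hc]
        simp only [NCtxs.fill, hc, List.take_zero, List.drop_zero]
        rw [fill_plug_cs cs D l hcs]
      · have hc1 : c.holes = 1 := by omega
        have hcs : cs.holes = 0 := by omega
        simp only [NCtxs.plug, if_neg hc]
        simp only [NCtxs.fill, hc1, List.take_succ_cons, List.take_zero, List.drop_succ_cons,
          List.drop_zero]
        rw [holes_plug_c c D hc1]
        congr 1
        · rw [fill_plug_c c D (l.take D.holes) hc1, fill_take_c D l]
        · exact fill_zero_cs cs hcs _ _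
end


/-! ### Derivability utilities -/

theorem Deriv.mono {L : Set Ax} {n : ℕ} {S : NSeq} (h : Deriv L n S) :
    ∀ m, n ≤ m → Deriv L m S := by
  induction h with
  | step hs hp ih =>
      intro m hm
      obtain ⟨m', rfl⟩ : ∃ m', m = m' + 1 := ⟨m - 1, by omega⟩
      exact Deriv.step hs (fun p hp' => ih p hp' m' (by omega))

theorem dstep {L : Set Ax} {ps : List NSeq} {S : NSeq}
    (hs : Step L ps S) (hp : ∀ p ∈ ps, Derivable L p) : Derivable L S := by
  have : ∃ n, ∀ p ∈ ps, Deriv L n p := by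
    clear hs
    induction ps with
    | nil => exact ⟨0, by simp⟩
    | cons q ps ih =>
        obtain ⟨n₁, hn₁⟩ := ih (fun p h => hp p (List.mem_cons_of_mem _ h))
        obtain ⟨n₂, hn₂⟩ := hp q List.mem_cons_self
        refine ⟨max n₁ n₂, ?_⟩
        intro p hmem
        rcases List.mem_cons.1 hmem with rfl | hmem
        · exact hn₂.mono _ (le_max_right _ _)
        · exact (hn₁ p hmem).mono _ (le_max_left _ _)
  obtain ⟨n, hn⟩ := this
  exact ⟨n + 1, Deriv.step hs hn⟩

lemma fresh_not_mem (F : Finset ℕ) : F.sup id + 1 ∉ F := by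
  intro h
  have := Finset.le_sup (f := id) h
  simp only [id] at this
  omega

lemma mrot3 {α : Type} (a b c : α) (s : Multiset α) :
    a ::ₘ b ::ₘ c ::ₘ s = b ::ₘ c ::ₘ a ::ₘ s := by
  rw [Multiset.cons_swap a b, Multiset.cons_swap a c]

/-- Fill computation for the one-hole "context inside one bracket on top of a node". -/
lemma fillD3 (X : Multiset ℕ) (Γ Δ : Multiset Fml) (X' : Multiset ℕ) (Γ' Δ' : Multiset Fml) :
    NCtx.fill (.node X Γ Δ 0 (.cons (.node 0 0 0 1 .nil) .nil)) [.node X' Γ' Δ' .nil]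
      = .node X Γ Δ (.cons (.node X' Γ' Δ' .nil) .nil) := by
  show NSeq.node X Γ Δ (.cons (NSeq.merge (.node 0 0 0 .nil) (.node X' Γ' Δ' .nil)) .nil) = _
  simp only [NSeq.merge]
  rw [show (0 : Multiset ℕ) + X' = X' from zero_add X',
    show (0 : Multiset Fml) + Γ' = Γ' from zero_add Γ',
    show (0 : Multiset Fml) + Δ' = Δ' from zero_add Δ']
  rfl

/-- Fill computation for the two-hole context (root hole + one bracketed hole). -/
lemma fillD2 (X₁ : Multiset ℕ) (Γ₁ Δ₁ : Multiset Fml) (Y : Multiset ℕ) (Φ Ψ : Multiset Fml) :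
    NCtx.fill (.node 0 0 0 1 (.cons (.node 0 0 0 1 .nil) .nil))
        [.node X₁ Γ₁ Δ₁ .nil, .node Y Φ Ψ .nil]
      = .node X₁ Γ₁ Δ₁ (.cons (.node Y Φ Ψ .nil) .nil) := by
  show NSeq.merge
      (.node 0 0 0 (.cons (NSeq.merge (.node 0 0 0 .nil) (.node Y Φ Ψ .nil)) .nil))
      (.node X₁ Γ₁ Δ₁ .nil) = _
  simp only [NSeq.merge]
  rw [show (0 : Multiset ℕ) + Y = Y from zero_add Y,
    show (0 : Multiset Fml) + Φ = Φ from zero_add Φ,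
    show (0 : Multiset Fml) + Ψ = Ψ from zero_add Ψ,
    show (0 : Multiset ℕ) + X₁ = X₁ from zero_add X₁,
    show (0 : Multiset Fml) + Γ₁ = Γ₁ from zero_add Γ₁,
    show (0 : Multiset Fml) + Δ₁ = Δ₁ from zero_add Δ₁]
  rfl

/-- Symmetry helper: `x = y` yields `y = x` (with some junk left in the antecedent). -/
lemma sym_helper {L : Set Ax} (C : NCtx) (hC : C.holes = 1) (X : Multiset ℕ)
    (Γ Δ : Multiset Fml) (x y : ℕ)
    (h : Derivable L (C.fill [.node X
      (.eq y x ::ₘ .eq x y ::ₘ .eq x x ::ₘ Γ) Δ .nil])) :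
    Derivable L (C.fill [.node X (.eq x y ::ₘ Γ) Δ .nil]) := by
  refine dstep (Step.ref C X (.eq x y ::ₘ Γ) Δ x hC) ?_
  intro p hp
  rw [List.mem_singleton] at hp
  subst hp
  rw [show (Fml.eq x x ::ₘ Fml.eq x y ::ₘ Γ) = (Fml.eq x y ::ₘ Fml.eq x x ::ₘ Γ) from
    Multiset.cons_swap _ _ _]
  have hP1 : (Fml.eq (x+1) x).sub x (x+1) = Fml.eq x x := by
    simp [Fml.sub, Fml.substF]
  have hP2 : (Fml.eq (x+1) x).sub y (x+1) = Fml.eq y x := by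
    have : x ≠ x + 1 := by omega
    simp [Fml.sub, Fml.substF, this]
  have hstep := Step.repl (L := L) C X Γ Δ x y (x+1) (Fml.eq (x+1) x) hC (by trivial)
  rw [hP1, hP2] at hstep
  refine dstep hstep ?_
  intro p hp
  rw [List.mem_singleton] at hp
  subst hp
  exact h


/-! ### The main replacement lemma -/

lemma atomic_M {L : Set Ax} (C : NCtx) (hC : C.holes = 1) (X : Multiset ℕ)
    (Γ Δ : Multiset Fml) (x y z₀ : ℕ) (P : Fml) (hat : P.Atomic)
    (haty : (P.sub y z₀).Atomic) :
    Derivable L (C.fill [.node X (.eq x y ::ₘ (P.sub x z₀) ::ₘ Γ)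
      ((P.sub y z₀) ::ₘ Δ) .nil]) := by
  refine dstep (Step.repl C X Γ ((P.sub y z₀) ::ₘ Δ) x y z₀ P hC hat) ?_
  intro pr hpr
  rw [List.mem_singleton] at hpr
  subst hpr
  exact dstep (Step.init C X (.eq x y ::ₘ P.sub x z₀ ::ₘ Γ) Δ (P.sub y z₀) hC haty)
    (by simp)

lemma point_facts (x y z₀ : ℕ) (gp gq : ℕ) (hfresh1 : gp ≠ z₀) (hfresh2 : gq ≠ z₀)
    (hcond : gq = gp ∨ (gp = x ∧ gq = y)) :
    ((fun t => if t = z₀ then x else t) (if gp = gq then gp else z₀) = gp) ∧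
    ((fun t => if t = z₀ then y else t) (if gp = gq then gp else z₀) = gq) := by
  by_cases h : gp = gq
  · constructor
    · show (if (if gp = gq then gp else z₀) = z₀ then x else (if gp = gq then gp else z₀)) = gp
      rw [if_pos h, if_neg hfresh1]
    · show (if (if gp = gq then gp else z₀) = z₀ then y else (if gp = gq then gp else z₀)) = gq
      rw [if_pos h, if_neg hfresh1]
      exact h
  · obtain ⟨h1, h2⟩ : gp = x ∧ gq = y := by
      rcases hcond with h1 | h2
      · exact absurd h1.symm h
      · exact h2
    constructor
    · show (if (if gp = gq then gp else z₀) = z₀ then x else (if gp = gq then gp else z₀)) = gp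
      rw [if_neg h, if_pos rfl]
      exact h1.symm
    · show (if (if gp = gq then gp else z₀) = z₀ then y else (if gp = gq then gp else z₀)) = gq
      rw [if_neg h, if_pos rfl]
      exact h2.symm

theorem main_M (L : Set Ax) : ∀ (n : ℕ) (B : Fml), B.size ≤ n →
    ∀ (x y : ℕ) (p q : List (ℕ → ℕ)) (C : NCtx), C.holes = 1 →
    ∀ (X : Multiset ℕ) (Γ Δ : Multiset Fml),
    (∀ u ∈ B.fv, evalStack q u = evalStack p u ∨ (evalStack p u = x ∧ evalStack q u = y)) →
    Derivable L (C.fill [.node X (.eq x y ::ₘ applyStack p B ::ₘ Γ)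
      (applyStack q B ::ₘ Δ) .nil]) := by
  intro n
  induction n with
  | zero =>
      intro B hB
      have := B.one_le_size
      omega
  | succ n IH =>
    intro B hB x y p q C hC X Γ Δ hcond
    cases B with
    | rel i l =>
        set F := (l.map (evalStack p)).toFinset ∪ (l.map (evalStack q)).toFinset ∪ ({x, y} : Finset ℕ) with hF
        set z₀ := F.sup id + 1 with hz₀
        have hfr : ∀ a ∈ F, a ≠ z₀ := by
          intro a ha h
          rw [h, hz₀] at ha
          exact fresh_not_mem F ha
        set f : ℕ → ℕ := fun u => if evalStack p u = evalStack q u then evalStack p u else z₀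
          with hf
        set P := Fml.rel i (l.map f) with hP
        have hpt : ∀ u ∈ l,
            ((fun t => if t = z₀ then x else t) (f u) = evalStack p u) ∧
            ((fun t => if t = z₀ then y else t) (f u) = evalStack q u) := by
          intro u hu
          refine point_facts x y z₀ _ _ ?_ ?_ ?_
          · exact hfr _ (Finset.mem_union_left _ (Finset.mem_union_left _
              (List.mem_toFinset.2 (List.mem_map_of_mem (f := evalStack p) hu))))
          · exact hfr _ (Finset.mem_union_left _ (Finset.mem_union_right _
              (List.mem_toFinset.2 (List.mem_map_of_mem (f := evalStack q) hu))))
          · exact hcond u (show u ∈ l.toFinset from List.mem_toFinset.2 hu)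
        have key1 : P.sub x z₀ = Fml.rel i (l.map (evalStack p)) := by
          show Fml.rel i ((l.map f).map _) = _
          rw [List.map_map]
          exact congrArg (Fml.rel i) (List.map_congr_left (fun u hu => (hpt u hu).1))
        have key2 : P.sub y z₀ = Fml.rel i (l.map (evalStack q)) := by
          show Fml.rel i ((l.map f).map _) = _
          rw [List.map_map]
          exact congrArg (Fml.rel i) (List.map_congr_left (fun u hu => (hpt u hu).2))
        rw [applyStack_rel, applyStack_rel, ← key1, ← key2]
        exact atomic_M C hC X Γ Δ x y z₀ P (by trivial) (by rw [key2]; trivial)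
    | eq a b =>
        set F := ({evalStack p a, evalStack p b, evalStack q a, evalStack q b} : Finset ℕ)
          with hF
        set z₀ := F.sup id + 1 with hz₀
        have hfr : ∀ c ∈ F, c ≠ z₀ := by
          intro c hc h
          rw [h, hz₀] at hc
          exact fresh_not_mem F hc
        set f : ℕ → ℕ := fun u => if evalStack p u = evalStack q u then evalStack p u else z₀
          with hf
        set P := Fml.eq (f a) (f b) with hP
        have hpt : ∀ u ∈ ({a, b} : Finset ℕ),
            ((fun t => if t = z₀ then x else t) (f u) = evalStack p u) ∧
            ((fun t => if t = z₀ then y else t) (f u) = evalStack q u) := by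
          intro u hu
          rcases Finset.mem_insert.1 hu with rfl | hu'
          · refine point_facts x y z₀ _ _ (hfr _ (by simp [hF])) (hfr _ (by simp [hF])) ?_
            exact hcond u (by simp [Fml.fv])
          · rw [Finset.mem_singleton] at hu'
            subst hu'
            refine point_facts x y z₀ _ _ (hfr _ (by simp [hF])) (hfr _ (by simp [hF])) ?_
            exact hcond u (by simp [Fml.fv])
        have ha' := hpt a (by simp)
        have hb' := hpt b (by simp)
        have key1 : P.sub x z₀ = Fml.eq (evalStack p a) (evalStack p b) := by
          show Fml.eq _ _ = _
          rw [ha'.1, hb'.1]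
        have key2 : P.sub y z₀ = Fml.eq (evalStack q a) (evalStack q b) := by
          show Fml.eq _ _ = _
          rw [ha'.2, hb'.2]
        rw [applyStack_eq, applyStack_eq, ← key1, ← key2]
        exact atomic_M C hC X Γ Δ x y z₀ P (by trivial) (by rw [key2]; trivial)
    | bot =>
        rw [applyStack_bot]
        rw [show (Fml.eq x y ::ₘ Fml.bot ::ₘ Γ) = (Fml.bot ::ₘ Fml.eq x y ::ₘ Γ) from
          Multiset.cons_swap _ _ _]
        exact dstep (Step.botL C X (.eq x y ::ₘ Γ) (applyStack q .bot ::ₘ Δ) hC) (by simp)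
    | imp B₁ B₂ =>
        have hsz : B₁.size ≤ n ∧ B₂.size ≤ n := by
          have h1 := B₁.one_le_size
          have h2 := B₂.one_le_size
          simp only [Fml.size] at hB
          omega
        have hc1 : ∀ u ∈ B₁.fv, evalStack q u = evalStack p u ∨
            (evalStack p u = x ∧ evalStack q u = y) :=
          fun u hu => hcond u (Finset.mem_union_left _ hu)
        have hc2 : ∀ u ∈ B₂.fv, evalStack q u = evalStack p u ∨
            (evalStack p u = x ∧ evalStack q u = y) :=
          fun u hu => hcond u (Finset.mem_union_right _ hu)
        rw [applyStack_imp, applyStack_imp]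
        set P₁ := applyStack p B₁
        set P₂ := applyStack p B₂
        set Q₁ := applyStack q B₁
        set Q₂ := applyStack q B₂
        refine dstep (Step.impR C X (.eq x y ::ₘ .imp P₁ P₂ ::ₘ Γ) Δ Q₁ Q₂ hC) ?_
        intro pr hpr
        rw [List.mem_singleton] at hpr
        subst hpr
        rw [show (Q₁ ::ₘ Fml.eq x y ::ₘ Fml.imp P₁ P₂ ::ₘ Γ)
            = (Fml.imp P₁ P₂ ::ₘ Fml.eq x y ::ₘ Q₁ ::ₘ Γ) from by
          rw [mrot3 Q₁ (Fml.eq x y) (Fml.imp P₁ P₂) Γ]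
          exact Multiset.cons_swap _ _ _]
        refine dstep (Step.impL C X (.eq x y ::ₘ Q₁ ::ₘ Γ) (Q₂ ::ₘ Δ) P₁ P₂ hC) ?_
        intro pr hpr
        rcases List.mem_cons.1 hpr with rfl | hpr
        · -- eq x y, Q₁, Γ ⇒ P₁, Q₂, Δ : reverse direction via symmetry
          refine sym_helper C hC X (Q₁ ::ₘ Γ) (P₁ ::ₘ Q₂ ::ₘ Δ) x y ?_
          have := IH B₁ hsz.1 y x q p C hC X (.eq x y ::ₘ .eq x x ::ₘ Γ) (Q₂ ::ₘ Δ)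
            (fun u hu => by
              rcases hc1 u hu with h | h
              · exact Or.inl h.symm
              · exact Or.inr ⟨h.2, h.1⟩)
          rw [show (Fml.eq y x ::ₘ Q₁ ::ₘ Fml.eq x y ::ₘ Fml.eq x x ::ₘ Γ)
              = (Fml.eq y x ::ₘ Fml.eq x y ::ₘ Fml.eq x x ::ₘ Q₁ ::ₘ Γ) from by
            exact congrArg (Fml.eq y x ::ₘ ·) (mrot3 Q₁ (Fml.eq x y) (Fml.eq x x) Γ)] at this
          exact this
        · rw [List.mem_singleton] at hpr
          subst hpr
          rw [show (P₂ ::ₘ Fml.eq x y ::ₘ Q₁ ::ₘ Γ)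
              = (Fml.eq x y ::ₘ P₂ ::ₘ Q₁ ::ₘ Γ) from Multiset.cons_swap _ _ _]
          exact IH B₂ hsz.2 x y p q C hC X (Q₁ ::ₘ Γ) Δ hc2
    | box B₀ =>
        have hsz : B₀.size ≤ n := by
          have h0 := B₀.one_le_size
          simp only [Fml.size] at hB
          omega
        rw [applyStack_box, applyStack_box]
        set P₀ := applyStack p B₀
        set Q₀ := applyStack q B₀
        refine dstep (Step.boxR C X (.eq x y ::ₘ .box P₀ ::ₘ Γ) Δ Q₀ hC) ?_
        intro pr hpr
        rw [List.mem_singleton] at hpr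
        subst hpr
        rw [show (Fml.eq x y ::ₘ Fml.box P₀ ::ₘ Γ)
            = (Fml.box P₀ ::ₘ Fml.eq x y ::ₘ Γ) from Multiset.cons_swap _ _ _]
        refine dstep (Step.boxL C X 0 (.eq x y ::ₘ Γ) Δ 0 {Q₀} .nil P₀ hC) ?_
        intro pr hpr
        rw [List.mem_singleton] at hpr
        subst hpr
        -- now use rig via a two-hole context
        set D₂ : NCtx := .node 0 0 0 1 (.cons (.node 0 0 0 1 .nil) .nil) with hD₂
        have hD₂holes : D₂.holes = 2 := rfl
        have hC₂ : (C.plug D₂).holes = 2 := by rw [holes_plug_c C D₂ hC, hD₂holes]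
        have hrig := Step.rig (L := L) (C.plug D₂) X 0 (.box P₀ ::ₘ Γ) Δ (P₀ ::ₘ 0) {Q₀} x y hC₂
        rw [fill_plug_c C D₂ _ hC, fill_plug_c C D₂ _ hC, hD₂, fillD2, fillD2] at hrig
        rw [show (Fml.box P₀ ::ₘ Fml.eq x y ::ₘ Γ)
            = (Fml.eq x y ::ₘ Fml.box P₀ ::ₘ Γ) from Multiset.cons_swap _ _ _]
        refine dstep hrig ?_
        intro pr hpr
        rw [List.mem_singleton] at hpr
        subst hpr
        set D₃ : NCtx := .node X (.eq x y ::ₘ .box P₀ ::ₘ Γ) Δ 0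
          (.cons (.node 0 0 0 1 .nil) .nil) with hD₃
        have hD₃holes : D₃.holes = 1 := rfl
        have hC₃ : (C.plug D₃).holes = 1 := by rw [holes_plug_c C D₃ hC, hD₃holes]
        have := IH B₀ hsz x y p q (C.plug D₃) hC₃ 0 0 0
          (fun u hu => hcond u (by simpa [Fml.fv] using hu))
        rw [fill_plug_c C D₃ _ hC, hD₃, fillD3] at this
        rw [show (Q₀ ::ₘ (0 : Multiset Fml)) = ({Q₀} : Multiset Fml) from rfl] at this
        exact this
    | all w B₀ =>
        have hsz : B₀.size ≤ n := by
          have h0 := B₀.one_le_size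
          simp only [Fml.size] at hB
          omega
        obtain ⟨W₁, p', hp'eq, hp'w, hp'other⟩ := applyStack_all p w B₀
        obtain ⟨W₂, q', hq'eq, hq'w, hq'other⟩ := applyStack_all q w B₀
        rw [hp'eq, hq'eq]
        set G₁ := applyStack p' B₀ with hG₁
        set H₁ := applyStack q' B₀ with hH₁
        set S₀ := C.fill [.node X (.eq x y ::ₘ .all W₁ G₁ ::ₘ Γ) (.all W₂ H₁ ::ₘ Δ) .nil]
          with hS₀
        set v := (NSeq.fv S₀).sup id + 1 with hv
        have hvfresh : v ∉ NSeq.fv S₀ := fresh_not_mem _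
        refine dstep (Step.allR C X (.eq x y ::ₘ .all W₁ G₁ ::ₘ Γ) Δ W₂ v H₁ hC hvfresh) ?_
        intro pr hpr
        rw [List.mem_singleton] at hpr
        subst hpr
        rw [show (Fml.eq x y ::ₘ Fml.all W₁ G₁ ::ₘ Γ)
            = (Fml.all W₁ G₁ ::ₘ Fml.eq x y ::ₘ Γ) from Multiset.cons_swap _ _ _]
        refine dstep (Step.allL C X (.eq x y ::ₘ Γ) (H₁.sub v W₂ ::ₘ Δ) W₁ v G₁ hC) ?_
        intro pr hpr
        rw [List.mem_singleton] at hpr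
        subst hpr
        rw [show (G₁.sub v W₁ ::ₘ Fml.all W₁ G₁ ::ₘ Fml.eq x y ::ₘ Γ)
            = (Fml.eq x y ::ₘ G₁.sub v W₁ ::ₘ Fml.all W₁ G₁ ::ₘ Γ) from by
          rw [mrot3, mrot3]]
        have hGs : G₁.sub v W₁ = applyStack (p' ++ [fun t => if t = W₁ then v else t]) B₀ := by
          rw [applyStack_append_single, hG₁]; rfl
        have hHs : H₁.sub v W₂ = applyStack (q' ++ [fun t => if t = W₂ then v else t]) B₀ := by
          rw [applyStack_append_single, hH₁]; rfl
        rw [hGs, hHs]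
        refine IH B₀ hsz x y _ _ C hC (v ::ₘ X) (.all W₁ G₁ ::ₘ Γ) Δ ?_
        intro u hu
        by_cases huw : u = w
        · subst huw
          rw [evalStack_append_single, evalStack_append_single, hp'w, hq'w]
          simp
        · have hu' : u ∈ (B₀.fv).erase w := Finset.mem_erase.2 ⟨huw, hu⟩
          obtain ⟨hp1, hp2⟩ := hp'other u hu'
          obtain ⟨hq1, hq2⟩ := hq'other u hu'
          rw [evalStack_append_single, evalStack_append_single, hp1, hq1]
          simp only [if_neg hp2, if_neg hq2]
          exact hcond u (by simpa [Fml.fv] using hu')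

/-- **Lemma 2**: for every properly closed nested calculus `NQ.L`, every context `S{·}`,
all variables `x, y, z` and every 𝓛-formula `A`, the nested sequents `S{ ⇒ x=x }` and
`S{ x=y, A(x/z) ⇒ A(y/z) }` are `NQ.L`-derivable. -/
theorem identity_sequents_derivable (L : Set Ax) (hL : ProperlyClosed L)
    (C : NCtx) (hC : C.holes = 1) (x y z : ℕ) (A : Fml) :
    Derivable L (C.fill [.node 0 0 {Fml.eq x x} .nil]) ∧
    Derivable L (C.fill [.node 0 {Fml.eq x y, A.sub x z} {A.sub y z} .nil]) := by
  constructor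
  · refine dstep (Step.ref C 0 0 {Fml.eq x x} x hC) ?_
    intro pr hpr
    rw [List.mem_singleton] at hpr
    subst hpr
    have h0 : ({Fml.eq x x} : Multiset Fml) = Fml.eq x x ::ₘ 0 := rfl
    rw [h0]
    exact dstep (Step.init C 0 0 0 (Fml.eq x x) hC (by trivial)) (by simp)
  · have hM := main_M L A.size A le_rfl x y
      [fun u => if u = z then x else u] [fun u => if u = z then y else u] C hC 0 0 0
      (by
        intro u hu
        by_cases huz : u = z
        · subst huz
          right
          constructor <;> simp
        · left
          simp [huz])
    have h1 : applyStack [fun u => if u = z then x else u] A = A.sub x z := rfl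
    have h2 : applyStack [fun u => if u = z then y else u] A = A.sub y z := rfl
    rw [h1, h2] at hM
    have h3 : ({Fml.eq x y, A.sub x z} : Multiset Fml) = Fml.eq x y ::ₘ A.sub x z ::ₘ 0 := rfl
    have h4 : ({A.sub y z} : Multiset Fml) = A.sub y z ::ₘ 0 := rfl
    rw [h3, h4]
    exact hM

end NQML
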